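/- arXiv:2202.08544 — 5 statements merged into one kernel-verified Lean document; each statement's English description precedes it below -/
import Mathlib

section
/- Let Π = (Δ, Σ, 𝒱, ℰ) be an LCL problem for Δ-regular unrooted trees and let 𝒮 ⊆ 𝒱 be a set of node configurations with trim(𝒮) ≠ ∅. Then for every node configuration C ∈ trim(𝒮) and every label σ occurring in the multiset C, there exist a node configuration C′ ∈ trim(𝒮) and a label σ′ occurring in C′ such that the size-2 multiset {σ, σ′} lies in ℰ. -/
/-- `lclCompat 𝒮 ℰ i τ` : there is a correct half-edge labeling of a copy of the
rooted tree `T_i` hanging below an edge whose half-edge on the `T_i` side is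
labeled `τ`, such that the node configuration of every degree-`Δ` node of this
subtree lies in `𝒮` and every edge configuration lies in `ℰ`. -/
def lclCompat {L : Type} [DecidableEq L] (S E : Set (Multiset L)) : ℕ → L → Prop
  | 0, _ => True
  | i + 1, τ => ∃ C ∈ S, τ ∈ C ∧
      ∀ β ∈ C.erase τ, ∃ τ', ({β, τ'} : Multiset L) ∈ E ∧ lclCompat S E i τ'

/-- For `i ≥ 1`: there exists a correct half-edge labeling of `T_i*` in which the
node configuration of the root is `C` and the node configuration of every other
degree-`Δ` node lies in `𝒮` (edge configurations lie in `ℰ`). -/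
def lclTreeOk {L : Type} [DecidableEq L] (S E : Set (Multiset L)) (i : ℕ)
    (C : Multiset L) : Prop :=
  ∀ β ∈ C, ∃ τ, ({β, τ} : Multiset L) ∈ E ∧ lclCompat S E (i - 1) τ

/-- `trim 𝒮`: configurations `C ∈ 𝒮` such that for every `i ≥ 1` there is a correct
half-edge labeling of `T_i*` with root configuration `C` and all other degree-`Δ`
node configurations in `𝒮`. -/
def lclTrim {L : Type} [DecidableEq L] (S E : Set (Multiset L)) : Set (Multiset L) :=
  {C | C ∈ S ∧ ∀ i : ℕ, 1 ≤ i → lclTreeOk S E i C}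

/-!
Both the partner label `σ'` and the configuration `C'` are found by the same compactness
argument: a property that weakens as the depth decreases and that, at every depth, is
witnessed inside a fixed finite set, is witnessed by a single element of that set at all
depths (pigeonhole over the depths). Labels form a finite set, and so do the configurations
in `𝒮`, all of which have size `Δ`. The label `σ` of the original edge then serves as the
partner of `σ'` at the root of `C'`, because `σ` is compatible at every depth as a label of
`C ∈ trim 𝒮`.
-/

theorem Set.Finite.exists_forall_of_antitone {α : Type*} {s : Set α} (hs : s.Finite)
    {P : ℕ → α → Prop} (hP : ∀ x, Antitone (P · x)) (h : ∀ n, ∃ x ∈ s, P n x) :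
    ∃ x ∈ s, ∀ n, P n x := by
  choose f hfs hfP using h
  have : Finite s := hs.to_subtype
  obtain ⟨x, hx⟩ := Finite.exists_infinite_fiber fun n => (⟨f n, hfs n⟩ : s)
  refine ⟨x, x.2, fun n => ?_⟩
  obtain ⟨m, hm, hnm⟩ := (Set.infinite_coe_iff.mp hx).exists_gt n
  have hfm : f m = x := congrArg Subtype.val hm
  exact hP x hnm.le (hfm ▸ hfP m)

theorem Multiset.finite_setOf_card_eq (L : Type*) [Finite L] (n : ℕ) :
    {C : Multiset L | Multiset.card C = n}.Finite :=
  (Set.finite_range fun s : Sym L n => (s : Multiset L)).subset fun C hC => ⟨⟨C, hC⟩, rfl⟩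

section Trim

variable {L : Type} [DecidableEq L] {S E : Set (Multiset L)}

theorem lclCompat_antitone (τ : L) : Antitone (lclCompat S E · τ) := by
  refine antitone_nat_of_succ_le fun n => ?_
  induction n generalizing τ with
  | zero => exact fun _ => trivial
  | succ n ih =>
    rintro ⟨C, hCS, hτC, hC⟩
    refine ⟨C, hCS, hτC, fun β hβ => ?_⟩
    obtain ⟨τ', hE, hτ'⟩ := hC β hβ
    exact ⟨τ', hE, ih τ' hτ'⟩

theorem lclCompat_of_mem_lclTrim {C : Multiset L} {σ : L} (hC : C ∈ lclTrim S E)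
    (hσ : σ ∈ C) (n : ℕ) : lclCompat S E n σ := by
  cases n with
  | zero => trivial
  | succ m =>
    refine ⟨C, hC.1, hσ, fun β hβ => ?_⟩
    simpa using hC.2 (m + 1) (by omega) β (Multiset.mem_of_mem_erase hβ)

theorem exists_forall_lclCompat_of_mem_lclTrim [Finite L] {C : Multiset L} {σ : L}
    (hC : C ∈ lclTrim S E) (hσ : σ ∈ C) :
    ∃ τ, ({σ, τ} : Multiset L) ∈ E ∧ ∀ n, lclCompat S E n τ := by
  obtain ⟨τ, -, hτ⟩ := Set.finite_univ.exists_forall_of_antitone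
    (P := fun n τ => ({σ, τ} : Multiset L) ∈ E ∧ lclCompat S E n τ)
    (fun τ _ _ hmn => And.imp_right (lclCompat_antitone τ hmn))
    fun n => (hC.2 (n + 1) (by omega) σ hσ).imp fun _ h => ⟨Set.mem_univ _, h⟩
  exact ⟨τ, (hτ 0).1, fun n => (hτ n).2⟩

theorem exists_mem_lclTrim_of_forall_lclCompat (hS : S.Finite) {σ τ : L}
    (hστ : ({σ, τ} : Multiset L) ∈ E) (hσ : ∀ n, lclCompat S E n σ)
    (hτ : ∀ n, lclCompat S E n τ) : ∃ D ∈ lclTrim S E, τ ∈ D := by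
  obtain ⟨D, hDS, hD⟩ := hS.exists_forall_of_antitone
    (P := fun n D => τ ∈ D ∧
      ∀ β ∈ D.erase τ, ∃ τ', ({β, τ'} : Multiset L) ∈ E ∧ lclCompat S E n τ')
    (fun D _ _ hmn => And.imp_right fun h β hβ =>
      (h β hβ).imp fun τ' => And.imp_right (lclCompat_antitone τ' hmn))
    fun n => hτ (n + 1)
  refine ⟨D, ⟨hDS, fun i _ β hβ => ?_⟩, (hD 0).1⟩
  by_cases hβτ : β = τ
  · subst hβτ
    exact ⟨σ, Multiset.pair_comm σ β ▸ hστ, hσ _⟩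
  · exact (hD (i - 1)).2 β ((Multiset.mem_erase_of_ne hβτ).mpr hβ)

end Trim

theorem stmt0_general {L : Type} [Fintype L] [DecidableEq L]
    (Δ : ℕ) (V E : Set (Multiset L))
    (hV : ∀ C ∈ V, Multiset.card C = Δ)
    (S : Set (Multiset L)) (hS : S ⊆ V) :
    ∀ C ∈ lclTrim S E, ∀ σ ∈ C,
      ∃ C' ∈ lclTrim S E, ∃ σ' ∈ C', ({σ, σ'} : Multiset L) ∈ E := by
  intro C hC σ hσ
  obtain ⟨τ, hστ, hτ⟩ := exists_forall_lclCompat_of_mem_lclTrim hC hσ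
  have hSfin : S.Finite :=
    (Multiset.finite_setOf_card_eq L Δ).subset fun D hD => hV D (hS hD)
  obtain ⟨D, hD, hτD⟩ := exists_mem_lclTrim_of_forall_lclCompat hSfin hστ
    (lclCompat_of_mem_lclTrim hC hσ) hτ
  exact ⟨D, hD, τ, hτD, hστ⟩

/-- Property of trimming, unrooted trees. -/
theorem stmt0 {L : Type} [Fintype L] [DecidableEq L]
    (Δ : ℕ) (hΔ : 1 ≤ Δ) (V E : Set (Multiset L))
    (hV : ∀ C ∈ V, Multiset.card C = Δ)
    (hE : ∀ D ∈ E, Multiset.card D = 2)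
    (S : Set (Multiset L)) (hS : S ⊆ V)
    (hne : (lclTrim S E).Nonempty) :
    ∀ C ∈ lclTrim S E, ∀ σ ∈ C,
      ∃ C' ∈ lclTrim S E, ∃ σ' ∈ C', ({σ, σ'} : Multiset L) ∈ E :=
  stmt0_general Δ V E hV S hS
end

section
/- Let Π = (Δ, Σ, 𝒱, ℰ) be an LCL problem for Δ-regular unrooted trees, let 𝒟 be a set of size-2 multisets over Σ, and suppose the size-2 multiset {a, b} ∈ 𝒟 is not path-flexible with respect to M_𝒟. Then at least one of the following holds: (1) for at least one choice of s ∈ {(a,b), (b,a)} and t ∈ {(a,b), (b,a)} there is no walk of positive length from s to t in M_𝒟; or (2) there exists an integer x with 2 ≤ x ≤ |Σ|² such that for every positive integer k that is not an integer multiple of x there is neither a walk of length k from (a,b) to (a,b) nor a walk of length k from (b,a) to (b,a) in M_𝒟. -/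
/-!
Suppose all four pairs `s, t ∈ {(a,b), (b,a)}` are joined by walks of positive length, and
consider the additive monoid of lengths of closed walks at `(a,b)` and its gcd `g`.
Going around `(b,a)` via fixed walks `(a,b) → (b,a) → (a,b)` shows that `g` also divides
every closed-walk length at `(b,a)`. If `g = 1`, every large length is a closed-walk length
at `(a,b)`, and padding with the fixed walks makes `(a,b)` path-flexible. Hence `g ≥ 2`,
and `g ≤ |Σ|²` because pigeonhole shortens any closed walk to one of positive length at most
the number of vertices.
-/

/-- `hasWalk E k u v`: there is a walk of length exactly `k` from `u` to `v` in the
directed graph with edge relation `E`. -/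
def hasWalk {α : Type*} (E : α → α → Prop) : ℕ → α → α → Prop
  | 0, u, v => u = v
  | k + 1, u, v => ∃ w, E u w ∧ hasWalk E k w v

/-- Vertex set of the automaton `M_𝒟`: ordered pairs whose underlying size-2 multiset
lies in `𝒟`. -/
def mVert {L : Type} [DecidableEq L] (D : Set (Multiset L)) : Set (L × L) :=
  {p | ({p.1, p.2} : Multiset L) ∈ D}

/-- Edge relation of the automaton `M_𝒟` (w.r.t. the edge constraint `ℰ`):
`(a,b) → (c,d)` whenever both are vertices and `{b,c} ∈ ℰ`. -/
def mEdge {L : Type} [DecidableEq L] (D E : Set (Multiset L)) (p q : L × L) : Prop :=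
  p ∈ mVert D ∧ q ∈ mVert D ∧ ({p.2, q.1} : Multiset L) ∈ E

/-- The vertex `(a,b)` of `M_𝒟` (equivalently the multiset `{a,b} ∈ 𝒟`) is
path-flexible. -/
def flexPair {L : Type} [DecidableEq L] (D E : Set (Multiset L)) (a b : L) : Prop :=
  ∃ K : ℕ, ∀ k : ℕ, K ≤ k →
    hasWalk (mEdge D E) k (a, b) (a, b) ∧ hasWalk (mEdge D E) k (a, b) (b, a) ∧
    hasWalk (mEdge D E) k (b, a) (a, b) ∧ hasWalk (mEdge D E) k (b, a) (b, a)

/-- The relation `∼` on `𝒟`: `{a,b} ∼ {c,d}` iff there is a walk (of length `≥ 0`)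
from `s` to `t` in `M_𝒟` for every `s ∈ {(a,b),(b,a)}` and `t ∈ {(c,d),(d,c)}`. -/
def simPair {L : Type} [DecidableEq L] (D E : Set (Multiset L)) (a b c d : L) : Prop :=
  ∀ s ∈ ({(a, b), (b, a)} : Set (L × L)), ∀ t ∈ ({(c, d), (d, c)} : Set (L × L)),
    ∃ k : ℕ, hasWalk (mEdge D E) k s t

section Walks

variable {α : Type*} {Ed : α → α → Prop}

theorem hasWalk_add {k l : ℕ} {u v w : α} (h₁ : hasWalk Ed k u v) (h₂ : hasWalk Ed l v w) :
    hasWalk Ed (k + l) u w := by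
  induction k generalizing u with
  | zero => cases h₁; simpa using h₂
  | succ k ih =>
    obtain ⟨x, hux, hx⟩ := h₁
    rw [Nat.succ_add]
    exact ⟨x, hux, ih hx⟩

theorem hasWalk_iff_exists_seq {k : ℕ} {u v : α} :
    hasWalk Ed k u v ↔ ∃ f : ℕ → α, f 0 = u ∧ f k = v ∧ ∀ i < k, Ed (f i) (f (i + 1)) := by
  induction k generalizing u with
  | zero => exact ⟨fun h => ⟨fun _ => u, rfl, h, by simp⟩, fun ⟨f, h0, h1, _⟩ => h0 ▸ h1⟩
  | succ k ih =>
    constructor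
    · rintro ⟨w, huw, hw⟩
      obtain ⟨f, hf0, hfk, hf⟩ := ih.mp hw
      refine ⟨fun i => Nat.casesOn i u f, rfl, hfk, fun i hi => ?_⟩
      cases i with
      | zero => simpa [hf0] using huw
      | succ i => exact hf i (by omega)
    · rintro ⟨f, hf0, hfk, hf⟩
      exact ⟨f 1, hf0 ▸ hf 0 k.succ_pos,
        ih.mpr ⟨fun i => f (i + 1), rfl, hfk, fun i hi => hf (i + 1) (by omega)⟩⟩

theorem exists_hasWalk_lt_card [Fintype α] {k : ℕ} {u v : α} (h : hasWalk Ed k u v) :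
    ∃ j < Fintype.card α, hasWalk Ed j u v := by
  induction k using Nat.strong_induction_on with
  | _ k ih =>
    by_cases hk : k < Fintype.card α
    · exact ⟨k, hk, h⟩
    obtain ⟨f, hf0, hfk, hf⟩ := hasWalk_iff_exists_seq.mp h
    obtain ⟨i, j, hij, hfij⟩ : ∃ i j : Fin (k + 1), i < j ∧ f i = f j := by
      obtain ⟨i, j, hne, heq⟩ :=
        Fintype.exists_ne_map_eq_of_card_lt (fun i : Fin (k + 1) => f i)
          (by rw [Fintype.card_fin]; omega)
      rcases hne.lt_or_gt with hlt | hlt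
      exacts [⟨i, j, hlt, heq⟩, ⟨j, i, hlt, heq.symm⟩]
    have hij' : (i : ℕ) < j := hij
    have hj := j.is_lt
    have hprefix : hasWalk Ed i u (f i) :=
      hasWalk_iff_exists_seq.mpr ⟨f, hf0, rfl, fun t ht => hf t (by omega)⟩
    have hsuffix : hasWalk Ed (k - j) (f j) v :=
      hasWalk_iff_exists_seq.mpr ⟨fun t => f (j + t), rfl,
        show f (j + (k - j)) = v by rw [Nat.add_sub_cancel' (by omega), hfk],
        fun t ht => by simpa [add_assoc] using hf (j + t) (by omega)⟩
    exact ih _ (by omega) (hasWalk_add hprefix (hfij ▸ hsuffix))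

theorem exists_pos_hasWalk_le_card [Fintype α] {k : ℕ} {u : α} (hk : 0 < k)
    (h : hasWalk Ed k u u) : ∃ j, 0 < j ∧ j ≤ Fintype.card α ∧ hasWalk Ed j u u := by
  obtain ⟨k, rfl⟩ := Nat.exists_eq_add_one_of_ne_zero hk.ne'
  obtain ⟨w, huw, hwu⟩ := h
  obtain ⟨j, hj, hw⟩ := exists_hasWalk_lt_card hwu
  exact ⟨j + 1, j.succ_pos, hj, w, huw, hw⟩

variable (Ed) in
def closedWalkLengths (u : α) : AddSubmonoid ℕ where
  carrier := {k | hasWalk Ed k u u}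
  add_mem' := hasWalk_add
  zero_mem' := rfl

theorem setGcd_closedWalkLengths_dvd {u v : α} {p q k : ℕ} (hp : hasWalk Ed p u v)
    (hq : hasWalk Ed q v u) (hk : hasWalk Ed k v v) :
    Nat.setGcd (closedWalkLengths Ed u) ∣ k := by
  have hpq : Nat.setGcd (closedWalkLengths Ed u) ∣ p + q :=
    Nat.setGcd_dvd_of_mem (hasWalk_add hp hq)
  have hpkq : Nat.setGcd (closedWalkLengths Ed u) ∣ p + q + k :=
    Nat.setGcd_dvd_of_mem <| by
      rw [add_right_comm, add_assoc]; exact hasWalk_add hp (hasWalk_add hk hq)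
  exact (Nat.dvd_add_right hpq).mp hpkq

theorem eventually_hasWalk_of_setGcd_eq_one {u s t : α} {p q : ℕ}
    (h : Nat.setGcd (closedWalkLengths Ed u) = 1) (hs : hasWalk Ed p s u) (ht : hasWalk Ed q u t) :
    ∀ᶠ k in Filter.atTop, hasWalk Ed k s t := by
  obtain ⟨N, hN⟩ := Nat.exists_mem_closure_of_ge (closedWalkLengths Ed u : Set ℕ)
  rw [AddSubmonoid.closure_eq, h] at hN
  refine Filter.eventually_atTop.mpr ⟨p + N + q, fun k hk => ?_⟩
  have hloop : hasWalk Ed (k - p - q) u u := hN _ (by omega) (one_dvd _)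
  have hk' : p + (k - p - q + q) = k := by omega
  exact hk' ▸ hasWalk_add hs (hasWalk_add hloop ht)

end Walks

theorem flexPair_of_setGcd_eq_one {L : Type} [DecidableEq L] {D E : Set (Multiset L)} {a b : L}
    {p q : ℕ} (hp : hasWalk (mEdge D E) p (a, b) (b, a)) (hq : hasWalk (mEdge D E) q (b, a) (a, b))
    (h : Nat.setGcd (closedWalkLengths (mEdge D E) (a, b)) = 1) : flexPair D E a b := by
  have hself : hasWalk (mEdge D E) 0 (a, b) (a, b) := rfl
  obtain ⟨K, hK⟩ := Filter.eventually_atTop.mp <|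
    ((eventually_hasWalk_of_setGcd_eq_one h hself hself).and
      (eventually_hasWalk_of_setGcd_eq_one h hself hp)).and
    ((eventually_hasWalk_of_setGcd_eq_one h hq hself).and
      (eventually_hasWalk_of_setGcd_eq_one h hq hp))
  exact ⟨K, fun k hk => ⟨(hK k hk).1.1, (hK k hk).1.2, (hK k hk).2.1, (hK k hk).2.2⟩⟩

theorem stmt4_general {L : Type} [Fintype L] [DecidableEq L]
    (E : Set (Multiset L))
    (D : Set (Multiset L))
    (a b : L)
    (hflex : ¬ flexPair D E a b) :
    (∃ s ∈ ({(a, b), (b, a)} : Set (L × L)), ∃ t ∈ ({(a, b), (b, a)} : Set (L × L)),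
      ¬ ∃ k : ℕ, 0 < k ∧ hasWalk (mEdge D E) k s t) ∨
    (∃ x : ℕ, 2 ≤ x ∧ x ≤ Fintype.card L ^ 2 ∧
      ∀ k : ℕ, 0 < k → ¬ x ∣ k →
        ¬ hasWalk (mEdge D E) k (a, b) (a, b) ∧ ¬ hasWalk (mEdge D E) k (b, a) (b, a)) := by
  refine or_iff_not_imp_left.mpr fun hwalks => ?_
  push Not at hwalks
  obtain ⟨p, -, hp⟩ := hwalks (a, b) (by simp) (b, a) (by simp)
  obtain ⟨q, -, hq⟩ := hwalks (b, a) (by simp) (a, b) (by simp)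
  obtain ⟨r, hr, hloop⟩ := hwalks (a, b) (by simp) (a, b) (by simp)
  set g := Nat.setGcd (closedWalkLengths (mEdge D E) (a, b))
  have hg1 : g ≠ 1 := fun h => hflex (flexPair_of_setGcd_eq_one hp hq h)
  obtain ⟨m, hm, hm_card, hm_loop⟩ := exists_pos_hasWalk_le_card hr hloop
  have hgm : g ∣ m := Nat.setGcd_dvd_of_mem hm_loop
  have hg0 : g ≠ 0 := fun h => hm.ne' (zero_dvd_iff.mp (h ▸ hgm))
  refine ⟨g, by omega, ?_, fun k _ hk =>
    ⟨fun hw => hk (Nat.setGcd_dvd_of_mem hw), fun hw => hk (setGcd_closedWalkLengths_dvd hp hq hw)⟩⟩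
  calc g ≤ m := Nat.le_of_dvd hm hgm
    _ ≤ Fintype.card (L × L) := hm_card
    _ = Fintype.card L ^ 2 := by rw [Fintype.card_prod, sq]

/-- Property of path-inflexibility, unrooted trees. -/
theorem stmt4 {L : Type} [Fintype L] [DecidableEq L]
    (Δ : ℕ) (hΔ : 1 ≤ Δ) (V E : Set (Multiset L))
    (hV : ∀ C ∈ V, Multiset.card C = Δ)
    (hE : ∀ D' ∈ E, Multiset.card D' = 2)
    (D : Set (Multiset L)) (hD : ∀ D' ∈ D, Multiset.card D' = 2)
    (a b : L) (hab : ({a, b} : Multiset L) ∈ D)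
    (hflex : ¬ flexPair D E a b) :
    (∃ s ∈ ({(a, b), (b, a)} : Set (L × L)), ∃ t ∈ ({(a, b), (b, a)} : Set (L × L)),
      ¬ ∃ k : ℕ, 0 < k ∧ hasWalk (mEdge D E) k s t) ∨
    (∃ x : ℕ, 2 ≤ x ∧ x ≤ Fintype.card L ^ 2 ∧
      ∀ k : ℕ, 0 < k → ¬ x ∣ k →
        ¬ hasWalk (mEdge D E) k (a, b) (a, b) ∧ ¬ hasWalk (mEdge D E) k (b, a) (b, a)) :=
  stmt4_general E D a b hflex
end

section
/- Let Π = (Δ, Σ, 𝒱, ℰ) be an LCL problem for Δ-regular unrooted trees. In every good sequence (𝒱_1, 𝒟_1, 𝒱_2, 𝒟_2, …, 𝒱_k) one has 𝒱_1 ⊇ 𝒱_2 ⊇ ⋯ ⊇ 𝒱_k and 𝒟_1 ⊇ 𝒟_2 ⊇ ⋯ ⊇ 𝒟_{k−1}. Moreover, if Π admits a good sequence of some length k ≥ |𝒱| + 1, then Π admits a good sequence of length k′ for every positive integer k′. -/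
/-- `𝒟_𝒮`: the set of size-2 multisets that are sub-multisets of some `C ∈ 𝒮`. -/
def dOfS {L : Type} [DecidableEq L] (S : Set (Multiset L)) : Set (Multiset L) :=
  {D | Multiset.card D = 2 ∧ ∃ C ∈ S, D ≤ C}

/-- `𝒮↾_𝒟`: configurations of `𝒮` all of whose size-2 sub-multisets lie in `𝒟`. -/
def cfgRestrict {L : Type} [DecidableEq L] (S D : Set (Multiset L)) : Set (Multiset L) :=
  {C | C ∈ S ∧ ∀ D' : Multiset L, Multiset.card D' = 2 → D' ≤ C → D' ∈ D}

/-- `∼` transported to size-2 multisets. -/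
def simMul {L : Type} [DecidableEq L] (D E : Set (Multiset L)) (D₁ D₂ : Multiset L) : Prop :=
  ∃ a b c d : L, D₁ = ({a, b} : Multiset L) ∧ D₂ = ({c, d} : Multiset L) ∧ simPair D E a b c d

/-- Path-flexibility transported to size-2 multisets. -/
def flexMul {L : Type} [DecidableEq L] (D E : Set (Multiset L)) (D₁ : Multiset L) : Prop :=
  ∃ a b : L, D₁ = ({a, b} : Multiset L) ∧ flexPair D E a b

/-- `flexible-SCC(𝒟)`: the set of strongly connected components of `𝒟`
(equivalence classes of `∼` on `𝒟^∼`) all of whose elements are path-flexible. -/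
def flexSCC {L : Type} [DecidableEq L] (D E : Set (Multiset L)) : Set (Set (Multiset L)) :=
  {D' | (∃ D₀ ∈ D, simMul D E D₀ D₀ ∧
          D' = {D₁ | D₁ ∈ D ∧ simMul D E D₁ D₁ ∧ simMul D E D₁ D₀}) ∧
        ∀ D₁ ∈ D', flexMul D E D₁}

/-- A good sequence `(𝒱_1, 𝒟_1, 𝒱_2, 𝒟_2, …, 𝒱_k)` for an LCL problem
`Π = (Δ, Σ, 𝒱, ℰ)` on `Δ`-regular unrooted trees. -/
def goodSeqU {L : Type} [DecidableEq L] (V E : Set (Multiset L)) (k : ℕ)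
    (Vs Ds : ℕ → Set (Multiset L)) : Prop :=
  Vs 1 = lclTrim V E ∧
  (∀ i : ℕ, 1 ≤ i → i ≤ k - 1 → Ds i ∈ flexSCC (dOfS (Vs i)) E) ∧
  (∀ i : ℕ, 2 ≤ i → i ≤ k → Vs i = lclTrim (cfgRestrict (Vs (i - 1)) (Ds (i - 1))) E) ∧
  (Vs k).Nonempty

/-
A good sequence is a descending chain: `𝒱_{i+1} = trim(𝒱_i↾_{𝒟_i}) ⊆ 𝒱_i`, and `𝒟_{i+1}` consists of
size-2 sub-multisets of configurations in `𝒱_i↾_{𝒟_i}`, hence lies in `𝒟_i`. Since `𝒱` is finite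
(its elements are size-`Δ` multisets over a finite alphabet), a chain `𝒱_1 ⊇ ⋯ ⊇ 𝒱_k` of nonempty
sets with `k > |𝒱|` must stall: `𝒱_{i+1} = 𝒱_i` for some `i < k`. From then on the recursion is at
a fixed point, so freezing the sequence at index `i` gives good sequences of every length.
-/

lemma exists_succ_eq_of_ncard_le {α : Type*} {s : ℕ → Set α} {n : ℕ}
    (hanti : ∀ i < n, s (i + 1) ⊆ s i) (hfin : (s 0).Finite) (hne : (s n).Nonempty)
    (hcard : (s 0).ncard ≤ n) : ∃ i < n, s (i + 1) = s i := by
  induction n generalizing s with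
  | zero => exact absurd hcard (Set.ncard_pos hfin |>.mpr hne).not_ge
  | succ n ih =>
    by_cases h0 : s 1 = s 0
    · exact ⟨0, n.succ_pos, h0⟩
    have hlt : (s 1).ncard < (s 0).ncard :=
      Set.ncard_lt_ncard ((hanti 0 n.succ_pos).ssubset_of_ne h0) hfin
    obtain ⟨i, hi, heq⟩ := ih (s := fun j => s (j + 1)) (fun i hi => hanti (i + 1) (by omega))
      (hfin.subset (hanti 0 n.succ_pos)) hne (by simp only [zero_add]; omega)
    exact ⟨i + 1, by omega, heq⟩

section LCL

variable {L : Type} [DecidableEq L]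

lemma lclTrim_subset (S E : Set (Multiset L)) : lclTrim S E ⊆ S :=
  fun _ hC => hC.1

lemma cfgRestrict_subset (S D : Set (Multiset L)) : cfgRestrict S D ⊆ S :=
  fun _ hC => hC.1

lemma dOfS_mono {S T : Set (Multiset L)} (h : S ⊆ T) : dOfS S ⊆ dOfS T :=
  fun _ ⟨hcard, C, hC, hle⟩ => ⟨hcard, C, h hC, hle⟩

lemma dOfS_cfgRestrict_subset (S D : Set (Multiset L)) : dOfS (cfgRestrict S D) ⊆ D :=
  fun _ ⟨hcard, _, hC, hle⟩ => hC.2 _ hcard hle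

lemma subset_of_mem_flexSCC {D E D' : Set (Multiset L)} (h : D' ∈ flexSCC D E) : D' ⊆ D := by
  obtain ⟨⟨_, _, _, rfl⟩, _⟩ := h
  exact fun _ hD₁ => hD₁.1

namespace goodSeqU

variable {V E : Set (Multiset L)} {k : ℕ} {Vs Ds : ℕ → Set (Multiset L)}

lemma succ_eq (hg : goodSeqU V E k Vs Ds) {i : ℕ} (hi : 1 ≤ i) (hik : i + 1 ≤ k) :
    Vs (i + 1) = lclTrim (cfgRestrict (Vs i) (Ds i)) E :=
  hg.2.2.1 (i + 1) (by omega) hik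

lemma succ_subset (hg : goodSeqU V E k Vs Ds) {i : ℕ} (hi : 1 ≤ i) (hik : i + 1 ≤ k) :
    Vs (i + 1) ⊆ Vs i := by
  rw [hg.succ_eq hi hik]
  exact (lclTrim_subset _ _).trans (cfgRestrict_subset _ _)

lemma subset_of_le (hg : goodSeqU V E k Vs Ds) {a b : ℕ} (ha : 1 ≤ a) (hab : a ≤ b)
    (hbk : b ≤ k) : Vs b ⊆ Vs a := by
  induction b, hab using Nat.le_induction with
  | base => exact subset_rfl
  | succ n hn ih => exact (hg.succ_subset (by omega) hbk).trans (ih (by omega))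

lemma ds_succ_subset (hg : goodSeqU V E k Vs Ds) {i : ℕ} (hi : 1 ≤ i) (hik : i + 1 ≤ k - 1) :
    Ds (i + 1) ⊆ Ds i :=
  calc Ds (i + 1) ⊆ dOfS (Vs (i + 1)) := subset_of_mem_flexSCC (hg.2.1 (i + 1) (by omega) hik)
    _ = dOfS (lclTrim (cfgRestrict (Vs i) (Ds i)) E) := by rw [hg.succ_eq hi (by omega)]
    _ ⊆ dOfS (cfgRestrict (Vs i) (Ds i)) := dOfS_mono (lclTrim_subset _ _)
    _ ⊆ Ds i := dOfS_cfgRestrict_subset _ _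

lemma clamp_of_succ_eq (hg : goodSeqU V E k Vs Ds) {i : ℕ} (hi : 1 ≤ i) (hik : i + 1 ≤ k)
    (hfix : Vs (i + 1) = Vs i) {k' : ℕ} (hk' : 1 ≤ k') :
    goodSeqU V E k' (fun j => Vs (min j i)) (fun j => Ds (min j i)) := by
  refine ⟨by simpa [min_eq_left hi] using hg.1, fun j hj _ => hg.2.1 _ (by omega) (by omega),
    fun j hj _ => ?_, (hg.2.2.2.mono (hg.subset_of_le (by omega) (by omega) le_rfl))⟩
  rcases le_or_gt j i with hji | hji
  · simpa [min_eq_left hji, min_eq_left (show j - 1 ≤ i by omega)] using hg.2.2.1 j hj (by omega)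
  · simpa [min_eq_right hji.le, min_eq_right (show i ≤ j - 1 by omega), hfix]
      using hg.succ_eq hi hik

end goodSeqU

end LCL

theorem stmt7_general {L : Type} [Fintype L] [DecidableEq L]
    (Δ : ℕ) (V E : Set (Multiset L))
    (hV : ∀ C ∈ V, Multiset.card C = Δ) :
    (∀ (k : ℕ) (Vs Ds : ℕ → Set (Multiset L)), 1 ≤ k → goodSeqU V E k Vs Ds →
      (∀ i : ℕ, 1 ≤ i → i + 1 ≤ k → Vs (i + 1) ⊆ Vs i) ∧
      (∀ i : ℕ, 1 ≤ i → i + 1 ≤ k - 1 → Ds (i + 1) ⊆ Ds i)) ∧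
    ((∃ (k : ℕ) (Vs Ds : ℕ → Set (Multiset L)),
        V.ncard + 1 ≤ k ∧ goodSeqU V E k Vs Ds) →
      ∀ k' : ℕ, 1 ≤ k' → ∃ Vs Ds : ℕ → Set (Multiset L), goodSeqU V E k' Vs Ds) := by
  refine ⟨fun k Vs Ds _ hg => ⟨fun _ => hg.succ_subset, fun _ => hg.ds_succ_subset⟩, ?_⟩
  rintro ⟨k, Vs, Ds, hk, hg⟩ k' hk'
  have hVfin : V.Finite := (Set.finite_range ((↑) : Sym L Δ → Multiset L)).subset
    fun C hC => ⟨⟨C, hV C hC⟩, rfl⟩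
  have hV₁ : Vs 1 ⊆ V := hg.1 ▸ lclTrim_subset V E
  obtain ⟨i, hik, hfix⟩ := exists_succ_eq_of_ncard_le (s := fun j => Vs (j + 1)) (n := k - 1)
    (fun i _ => hg.succ_subset (by omega) (by omega)) (hVfin.subset hV₁)
    (by simpa [Nat.sub_add_cancel (show 1 ≤ k by omega)] using hg.2.2.2)
    (by have := Set.ncard_le_ncard hV₁ hVfin; simp only [zero_add]; omega)
  exact ⟨_, _, hg.clamp_of_succ_eq (by omega) (by omega) hfix hk'⟩

/-- Good sequences are decreasing, and an extremely long good
sequence yields good sequences of every length. -/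
theorem stmt7 {L : Type} [Fintype L] [DecidableEq L]
    (Δ : ℕ) (hΔ : 1 ≤ Δ) (V E : Set (Multiset L))
    (hV : ∀ C ∈ V, Multiset.card C = Δ)
    (hE : ∀ D' ∈ E, Multiset.card D' = 2) :
    (∀ (k : ℕ) (Vs Ds : ℕ → Set (Multiset L)), 1 ≤ k → goodSeqU V E k Vs Ds →
      (∀ i : ℕ, 1 ≤ i → i + 1 ≤ k → Vs (i + 1) ⊆ Vs i) ∧
      (∀ i : ℕ, 1 ≤ i → i + 1 ≤ k - 1 → Ds (i + 1) ⊆ Ds i)) ∧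
    ((∃ (k : ℕ) (Vs Ds : ℕ → Set (Multiset L)),
        V.ncard + 1 ≤ k ∧ goodSeqU V E k Vs Ds) →
      ∀ k' : ℕ, 1 ≤ k' → ∃ Vs Ds : ℕ → Set (Multiset L), goodSeqU V E k' Vs Ds) :=
  stmt7_general Δ V E hV
end

section
/- Let G be a finite rooted tree with n nodes and fix positive integers γ, ℓ and L. If n · (2ℓ/(γ + 2ℓ))^{L−1} ≤ γ, then every node of G is removed during the first L iterations of the rake-and-compress process; indeed, every node is removed by the end of the γ rake operations of the L-th iteration. -/
/-- A finite rooted tree on vertex type `V`, with each edge oriented from child to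
parent: `parent v` is the parent of `v` (with `parent root = root`), and every
node reaches the root by iterating `parent`. -/
structure ParentTree (V : Type) where
  root : V
  parent : V → V
  parent_root : parent root = root
  reaches_root : ∀ v : V, ∃ n : ℕ, parent^[n] v = root

namespace ParentTree

variable {V : Type}

/-- Children of `v` that belong to the surviving set `S` (in-neighbors of `v` in the
current forest). -/
def childrenIn (T : ParentTree V) (S : Set V) (v : V) : Set V :=
  {u | u ∈ S ∧ T.parent u = v ∧ u ≠ v}

/-- One rake operation: remove all nodes of indegree `0` in the current forest. -/
def rake (T : ParentTree V) (S : Set V) : Set V :=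
  {v | v ∈ S ∧ (T.childrenIn S v).Nonempty}

/-- `v` has indegree exactly `1` and outdegree exactly `1` in the current forest. -/
def deg11 (T : ParentTree V) (S : Set V) (v : V) : Prop :=
  v ∈ S ∧ (T.childrenIn S v).ncard = 1 ∧ T.parent v ∈ S ∧ T.parent v ≠ v

/-- `v` lies on a directed path of `ℓ` consecutive nodes, each of indegree exactly
`1` and outdegree exactly `1` in the current forest. -/
def onCompressPath (T : ParentTree V) (S : Set V) (ℓ : ℕ) (v : V) : Prop :=
  ∃ f : ℕ → V, (∀ j : ℕ, j < ℓ → T.deg11 S (f j)) ∧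
    (∀ j : ℕ, j + 1 < ℓ → T.parent (f (j + 1)) = f j) ∧
    ∃ j : ℕ, j < ℓ ∧ f j = v

/-- One compress operation (with parameter `ℓ`). -/
def compress (T : ParentTree V) (S : Set V) (ℓ : ℕ) : Set V :=
  {v | v ∈ S ∧ ¬ T.onCompressPath S ℓ v}

/-- Nodes surviving the first `i` iterations of the rake-and-compress process, where
one iteration consists of `γ` rake operations followed by one compress operation. -/
def survivors (T : ParentTree V) (γ ℓ : ℕ) : ℕ → Set V
  | 0 => Set.univ
  | i + 1 => T.compress ((T.rake)^[γ] (survivors T γ ℓ i)) ℓ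

/-- `U_{C,i}^v`: nodes `u` surviving the first `i` iterations that are descendants of
`v` in `G` such that every node on the path from `u` up to `v` also survives
(empty if `v` itself has been removed). -/
def ucSet (T : ParentTree V) (γ ℓ : ℕ) (i : ℕ) (v : V) : Set V :=
  {u | v ∈ T.survivors γ ℓ i ∧
    ∃ n : ℕ, T.parent^[n] u = v ∧ ∀ m : ℕ, m ≤ n → T.parent^[m] u ∈ T.survivors γ ℓ i}

end ParentTree

/-!
Write `n_i` for the number of nodes surviving `i` iterations, and let `F` be the forest left
after the `γ` rakes of iteration `i + 1`, with `λ` leaves. A rake removes exactly the current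
leaves and never increases their number, so `γ λ + |F| ≤ n_i`. Counting indegrees
(`∑ indeg + #roots = |F|`) shows that at most `2λ` nodes of `F` fail to have in- and
outdegree one, and every node that survives the compression lies fewer than `ℓ` steps above
such a node along a unary chain. Hence `n_{i+1} ≤ min (|F|, 2ℓλ)`, so
`(γ + 2ℓ) n_{i+1} ≤ 2ℓ n_i` and `n_{L-1} ≤ n (2ℓ/(γ+2ℓ))^{L-1} ≤ γ`. Finally a nonempty finite
forest has a leaf (a node of maximal depth), so each rake removes a node while any remain.
-/

lemma Set.Finite.ncard_eq_sum_ite_mem {α : Type*} {S X : Set α} (hS : S.Finite)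
    (hX : X ⊆ S) [DecidablePred (· ∈ X)] :
    X.ncard = ∑ v ∈ hS.toFinset, if v ∈ X then 1 else 0 := by
  rw [Finset.sum_boole, Nat.cast_id, ← Set.ncard_coe_finset, Finset.coe_filter]
  congr 1
  ext v
  simpa using fun h => hX h

namespace ParentTree

variable {V : Type} (T : ParentTree V)

open Classical in
noncomputable def depth (v : V) : ℕ := Nat.find (T.reaches_root v)

open Classical in
lemma depth_lt_of_parent_eq {u v : V} (hp : T.parent u = v) (hne : u ≠ v) :
    T.depth v < T.depth u := by
  have hu : T.parent^[T.depth u] u = T.root := Nat.find_spec (T.reaches_root u)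
  obtain ⟨m, hm⟩ : ∃ m, T.depth u = m + 1 := by
    refine Nat.exists_eq_add_one.mpr (Nat.pos_of_ne_zero fun h0 => hne ?_)
    rw [h0, Function.iterate_zero_apply] at hu
    rw [← hp, hu, T.parent_root]
  rw [hm, Function.iterate_succ_apply, hp] at hu
  exact hm ▸ Nat.lt_succ_of_le (Nat.find_le hu)

def leaves (S : Set V) : Set V := {v | v ∈ S ∧ ¬ (T.childrenIn S v).Nonempty}

lemma rake_eq_diff_leaves (S : Set V) : T.rake S = S \ T.leaves S := by
  ext v
  simp only [rake, leaves, Set.mem_sdiff, Set.mem_ofPred_eq]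
  tauto

lemma leaves_nonempty [Finite V] {S : Set V} (hS : S.Nonempty) : (T.leaves S).Nonempty := by
  obtain ⟨v, hv, hmax⟩ := S.exists_max_image T.depth S.toFinite hS
  exact ⟨v, hv, fun ⟨u, hu, hp, hne⟩ => (T.depth_lt_of_parent_eq hp hne).not_ge (hmax u hu)⟩

lemma ncard_leaves_rake_le [Finite V] (S : Set V) :
    (T.leaves (T.rake S)).ncard ≤ (T.leaves S).ncard := by
  refine (Set.ncard_le_ncard ?_ (Set.toFinite _)).trans (Set.ncard_image_le (f := T.parent))
  rintro v ⟨⟨hvS, c, hcS, hcv, hne⟩, hleaf⟩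
  exact ⟨c, ⟨hcS, fun hc => hleaf ⟨c, ⟨hcS, hc⟩, hcv, hne⟩⟩, hcv⟩

lemma ncard_rake_add_ncard_leaves [Finite V] (S : Set V) :
    (T.rake S).ncard + (T.leaves S).ncard = S.ncard := by
  rw [rake_eq_diff_leaves]
  exact Set.ncard_sdiff_add_ncard_of_subset (fun _ h => h.1)

lemma mul_ncard_leaves_rake_iterate_add_le [Finite V] (S : Set V) (k : ℕ) :
    k * (T.leaves (T.rake^[k] S)).ncard + (T.rake^[k] S).ncard ≤ S.ncard := by
  induction k with
  | zero => simp
  | succ k ih =>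
    rw [Function.iterate_succ_apply']
    have := T.ncard_leaves_rake_le (T.rake^[k] S)
    have := T.ncard_rake_add_ncard_leaves (T.rake^[k] S)
    nlinarith

lemma rake_iterate_eq_empty [Finite V] {S : Set V} {k : ℕ} (h : S.ncard ≤ k) :
    T.rake^[k] S = ∅ := by
  by_contra hne
  obtain ⟨v, hv⟩ := T.leaves_nonempty (Set.nonempty_iff_ne_empty.mpr hne)
  have hleaf : 0 < (T.leaves (T.rake^[k] S)).ncard := (Set.ncard_pos).mpr ⟨v, hv⟩
  have hrest : 0 < (T.rake^[k] S).ncard := (Set.ncard_pos).mpr ⟨v, hv.1⟩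
  have := T.mul_ncard_leaves_rake_iterate_add_le S k
  nlinarith

def notDeg11 (S : Set V) : Set V := {v | v ∈ S ∧ ¬ T.deg11 S v}

def forestRoots (S : Set V) : Set V := {v | v ∈ S ∧ (T.parent v ∈ S → T.parent v = v)}

lemma sum_ncard_childrenIn_add_ncard_forestRoots [Finite V] (S : Set V) :
    ∑ᶠ v ∈ S, (T.childrenIn S v).ncard + (T.forestRoots S).ncard = S.ncard := by
  have hunion : ⋃ v ∈ S, T.childrenIn S v = S \ T.forestRoots S := by
    ext u
    simp only [childrenIn, forestRoots, Set.mem_iUnion, Set.mem_sdiff, Set.mem_ofPred_eq,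
      exists_prop]
    constructor
    · rintro ⟨v, hv, hu, rfl, hne⟩
      exact ⟨hu, fun h => hne (h.2 hv).symm⟩
    · rintro ⟨hu, hp⟩
      by_cases hpS : T.parent u ∈ S
      · exact ⟨_, hpS, hu, rfl, fun h => hp ⟨hu, fun _ => h.symm⟩⟩
      · exact absurd ⟨hu, fun h => absurd h hpS⟩ hp
  have hdisj : S.PairwiseDisjoint (T.childrenIn S) := fun v _ w _ hvw =>
    Set.disjoint_left.mpr fun u hv hw => hvw (hv.2.1.symm.trans hw.2.1)
  rw [← S.toFinite.ncard_biUnion (fun _ _ => Set.toFinite _) hdisj, hunion]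
  exact Set.ncard_sdiff_add_ncard_of_subset fun _ h => h.1

lemma ncard_notDeg11_le [Finite V] (S : Set V) :
    (T.notDeg11 S).ncard ≤ 2 * (T.leaves S).ncard := by
  classical
  have hS := S.toFinite
  -- summed over `S`, the right side is `2 * #leaves + |S|` by the indegree count
  have hpoint : ∀ v ∈ hS.toFinset, (if v ∈ T.notDeg11 S then 1 else 0) + 1 ≤
      2 * (if v ∈ T.leaves S then 1 else 0) + (T.childrenIn S v).ncard +
        (if v ∈ T.forestRoots S then 1 else 0) := by
    intro v hv
    rw [Set.Finite.mem_toFinset] at hv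
    have hleaf : v ∈ T.leaves S ↔ (T.childrenIn S v).ncard = 0 := by
      rw [Set.ncard_eq_zero, ← Set.not_nonempty_iff_eq_empty]
      exact and_iff_right hv
    have hnd : v ∈ T.notDeg11 S → (T.childrenIn S v).ncard ≠ 1 ∨ v ∈ T.forestRoots S := by
      rintro ⟨-, hnd⟩
      by_contra! h
      by_cases hp : T.parent v ∈ S
      · exact hnd ⟨hv, h.1, hp, fun h' => h.2 ⟨hv, fun _ => h'⟩⟩
      · exact h.2 ⟨hv, fun h' => absurd h' hp⟩
    split_ifs <;> grind
  have hsum := Finset.sum_le_sum hpoint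
  have hhand := T.sum_ncard_childrenIn_add_ncard_forestRoots S
  rw [finsum_mem_eq_finite_toFinset_sum _ hS] at hhand
  rw [Finset.sum_add_distrib, Finset.sum_add_distrib, Finset.sum_add_distrib, ← Finset.mul_sum,
    ← hS.ncard_eq_sum_ite_mem (fun _ h => h.1),
    ← hS.ncard_eq_sum_ite_mem (fun _ h => h.1), ← hS.ncard_eq_sum_ite_mem (fun _ h => h.1),
    add_assoc, hhand, Finset.sum_const,
    ← Set.ncard_eq_toFinset_card S hS] at hsum
  simpa using hsum

open Classical in
noncomputable def soleChild (S : Set V) (v : V) : V :=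
  if h : ∃ u, T.childrenIn S v = {u} then h.choose else v

lemma soleChild_mem_childrenIn {S : Set V} {v : V} (h : T.deg11 S v) :
    T.soleChild S v ∈ T.childrenIn S v := by
  have hex : ∃ u, T.childrenIn S v = {u} := Set.ncard_eq_one.mp h.2.1
  rw [soleChild, dif_pos hex]
  exact (Set.ext_iff.mp hex.choose_spec _).mpr rfl

lemma soleChild_iterate_mem_and_parent_iterate {S : Set V} {v : V} (hv : v ∈ S) :
    ∀ k, (∀ j < k, T.deg11 S ((T.soleChild S)^[j] v)) →
      (T.soleChild S)^[k] v ∈ S ∧ T.parent^[k] ((T.soleChild S)^[k] v) = v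
  | 0, _ => ⟨hv, rfl⟩
  | k + 1, h => by
    obtain ⟨hmem, hpar, -⟩ := T.soleChild_mem_childrenIn (h k k.lt_succ_self)
    rw [Function.iterate_succ_apply', Function.iterate_succ_apply, hpar]
    exact ⟨hmem, (soleChild_iterate_mem_and_parent_iterate hv k fun j hj => h j (by omega)).2⟩

lemma exists_notDeg11_of_mem_compress {S : Set V} {ℓ : ℕ} (hℓ : 0 < ℓ) {v : V}
    (hv : v ∈ T.compress S ℓ) : ∃ k < ℓ, ∃ w ∈ T.notDeg11 S, T.parent^[k] w = v := by
  classical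
  have hex : ∃ k, k < ℓ ∧ ¬ T.deg11 S ((T.soleChild S)^[k] v) := by
    by_contra! hall
    refine hv.2 ⟨fun j => (T.soleChild S)^[j] v, hall, fun j hj => ?_, 0, hℓ, rfl⟩
    dsimp only
    rw [Function.iterate_succ_apply']
    exact (T.soleChild_mem_childrenIn (hall j (by omega))).2.1
  obtain ⟨hk, hnd⟩ := Nat.find_spec hex
  have hbelow : ∀ j < Nat.find hex, T.deg11 S ((T.soleChild S)^[j] v) := fun j hj => by
    simpa [hk.trans' hj] using Nat.find_min hex hj
  obtain ⟨hmem, hpar⟩ := T.soleChild_iterate_mem_and_parent_iterate hv.1 _ hbelow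
  exact ⟨_, hk, _, ⟨hmem, hnd⟩, hpar⟩

lemma ncard_compress_le [Finite V] (S : Set V) {ℓ : ℕ} (hℓ : 0 < ℓ) :
    (T.compress S ℓ).ncard ≤ ℓ * (T.notDeg11 S).ncard := by
  have hsub : T.compress S ℓ ⊆
      (fun p : V × ℕ => T.parent^[p.2] p.1) '' (T.notDeg11 S ×ˢ ↑(Finset.range ℓ)) := by
    intro v hv
    obtain ⟨k, hk, w, hw, rfl⟩ := T.exists_notDeg11_of_mem_compress hℓ hv
    exact ⟨(w, k), ⟨hw, by simpa using hk⟩, rfl⟩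
  calc (T.compress S ℓ).ncard
      ≤ (T.notDeg11 S ×ˢ (↑(Finset.range ℓ) : Set ℕ)).ncard :=
        (Set.ncard_le_ncard hsub (Set.toFinite _)).trans (Set.ncard_image_le (Set.toFinite _))
    _ = ℓ * (T.notDeg11 S).ncard := by
        rw [Set.ncard_prod, Set.ncard_coe_finset, Finset.card_range, mul_comm]

lemma mul_ncard_compress_rake_iterate_le [Finite V] (S : Set V) (γ : ℕ) {ℓ : ℕ} (hℓ : 0 < ℓ) :
    (γ + 2 * ℓ) * (T.compress (T.rake^[γ] S) ℓ).ncard ≤ 2 * ℓ * S.ncard := by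
  set R := T.rake^[γ] S
  have hraked := T.mul_ncard_leaves_rake_iterate_add_le S γ
  have hchains : (T.compress R ℓ).ncard ≤ 2 * ℓ * (T.leaves R).ncard :=
    calc (T.compress R ℓ).ncard ≤ ℓ * (T.notDeg11 R).ncard := T.ncard_compress_le R hℓ
      _ ≤ ℓ * (2 * (T.leaves R).ncard) := Nat.mul_le_mul_left ℓ (T.ncard_notDeg11_le R)
      _ = 2 * ℓ * (T.leaves R).ncard := by ring
  have hsub : (T.compress R ℓ).ncard ≤ R.ncard := Set.ncard_le_ncard fun _ h => h.1
  nlinarith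

lemma ncard_survivors_le [Finite V] (γ : ℕ) {ℓ : ℕ} (hℓ : 0 < ℓ) (i : ℕ) :
    ((T.survivors γ ℓ i).ncard : ℚ) ≤ Nat.card V * ((2 * ℓ : ℚ) / (γ + 2 * ℓ)) ^ i := by
  induction i with
  | zero => simp [survivors, Set.ncard_univ]
  | succ i ih =>
    have hpos : (0 : ℚ) < γ + 2 * ℓ := by positivity
    have hstep : ((γ : ℚ) + 2 * ℓ) * (T.survivors γ ℓ (i + 1)).ncard ≤
        2 * ℓ * (T.survivors γ ℓ i).ncard := by
      exact_mod_cast T.mul_ncard_compress_rake_iterate_le (T.survivors γ ℓ i) γ hℓ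
    calc ((T.survivors γ ℓ (i + 1)).ncard : ℚ)
        ≤ (2 * ℓ) / (γ + 2 * ℓ) * (T.survivors γ ℓ i).ncard := by
          rw [div_mul_eq_mul_div, le_div_iff₀ hpos]
          linarith
      _ ≤ (2 * ℓ) / (γ + 2 * ℓ) * (Nat.card V * ((2 * ℓ : ℚ) / (γ + 2 * ℓ)) ^ i) := by
          gcongr
      _ = Nat.card V * ((2 * ℓ : ℚ) / (γ + 2 * ℓ)) ^ (i + 1) := by ring

lemma compress_empty (ℓ : ℕ) : T.compress ∅ ℓ = ∅ :=
  Set.eq_empty_of_subset_empty fun _ h => h.1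

end ParentTree

theorem stmt15_general {V : Type} [Fintype V] (T : ParentTree V) (γ ℓ L : ℕ)
    (hℓ : 0 < ℓ) (hL : 0 < L)
    (hineq : (Fintype.card V : ℚ) * ((2 * ℓ : ℚ) / (γ + 2 * ℓ)) ^ (L - 1) ≤ (γ : ℚ)) :
    (T.rake)^[γ] (T.survivors γ ℓ (L - 1)) = ∅ ∧ T.survivors γ ℓ L = ∅ := by
  have hfew : (T.survivors γ ℓ (L - 1)).ncard ≤ γ := by
    have := T.ncard_survivors_le γ hℓ (L - 1)
    rw [Nat.card_eq_fintype_card] at this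
    exact_mod_cast this.trans hineq
  have hraked := T.rake_iterate_eq_empty hfew
  obtain ⟨m, rfl⟩ : ∃ m, L = m + 1 := Nat.exists_eq_add_one.mpr hL
  rw [Nat.add_sub_cancel] at hraked ⊢
  exact ⟨hraked, by rw [ParentTree.survivors, hraked, T.compress_empty]⟩

/-- Number of layers of the rake-and-compress process:
if `n · (2ℓ/(γ+2ℓ))^{L−1} ≤ γ` then every node is removed by the end of the `γ`
rake operations of the `L`-th iteration (and in particular within `L` iterations). -/
theorem stmt15 {V : Type} [Fintype V] (T : ParentTree V) (γ ℓ L : ℕ)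
    (hγ : 0 < γ) (hℓ : 0 < ℓ) (hL : 0 < L)
    (hineq : (Fintype.card V : ℚ) * ((2 * ℓ : ℚ) / (γ + 2 * ℓ)) ^ (L - 1) ≤ (γ : ℚ)) :
    (T.rake)^[γ] (T.survivors γ ℓ (L - 1)) = ∅ ∧ T.survivors γ ℓ L = ∅ :=
  stmt15_general T γ ℓ L hℓ hL hineq
end

section
/- Let Π = (Δ, Σ, 𝒱, ℰ) be an LCL problem for Δ-regular unrooted trees and let 𝒮 ⊆ 𝒱. Define Σ_1 = {σ ∈ Σ : σ occurs in some C ∈ 𝒮}, and for i ≥ 2 define Σ_i = {σ ∈ Σ_{i−1} : there exists C ∈ 𝒮 with σ occurring in C such that every label α of the size-(Δ−1) multiset obtained from C by removing one occurrence of σ satisfies {α, β} ∈ ℰ for some β ∈ Σ_{i−1}}. Then Σ_1 ⊇ Σ_2 ⊇ ⋯, the sequence stabilizes with Σ_i = Σ_{|Σ|+1} for all i ≥ |Σ|+1 (set Σ* := Σ_{|Σ|+1}), and for every C ∈ 𝒮: C ∈ trim(𝒮) if and only if every label α occurring in C satisfies {α, β} ∈ ℰ for some β ∈ Σ*. -/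
/-- The sequence `Σ_1 ⊇ Σ_2 ⊇ ⋯` used to compute `trim(𝒮)` for unrooted trees:
`Σ_1` is the set of labels occurring in some `C ∈ 𝒮`, and `σ ∈ Σ_{i}` (for `i ≥ 2`)
iff `σ ∈ Σ_{i-1}` and there is `C ∈ 𝒮` containing `σ` such that every label `α` of
`C` minus one occurrence of `σ` satisfies `{α, β} ∈ ℰ` for some `β ∈ Σ_{i-1}`. -/
def sigmaSeq {L : Type} [DecidableEq L] (S E : Set (Multiset L)) : ℕ → Set L
  | 0 => Set.univ
  | 1 => {σ | ∃ C ∈ S, σ ∈ C}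
  | i + 2 => {σ | σ ∈ sigmaSeq S E (i + 1) ∧
      ∃ C ∈ S, σ ∈ C ∧
        ∀ α ∈ C.erase σ, ∃ β ∈ sigmaSeq S E (i + 1), ({α, β} : Multiset L) ∈ E}

/-!
`Σ_{i+1}` is sandwiched between the labels `τ` of half-edges below which a labeled copy of
`T_{i+1}`, resp. `T_i`, can hang: `lclCompat (i + 1) τ → τ ∈ Σ_{i+1} → lclCompat i τ`.
So `C ∈ trim(𝒮)` iff every label of `C` has an `ℰ`-partner in every `Σ_i`. The `Σ_i` are the
iterates of a deflationary map on subsets of the finite alphabet, so they reach a fixed point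
within `|Σ|` steps; that fixed point `Σ*` is then contained in every `Σ_i`.
-/

open Function

section DeflationaryIterate

variable {α : Type*} [Finite α] (g : Set α → Set α)

theorem ncard_iterate_add_le_of_not_isFixedPt (hg : g ≤ id) (X : Set α) :
    ∀ n, (∀ k < n, ¬ IsFixedPt g (g^[k] X)) → (g^[n] X).ncard + n ≤ Nat.card α
  | 0, _ => by simpa using Set.ncard_le_card X
  | n + 1, h => by
    have hlt : (g^[n + 1] X).ncard < (g^[n] X).ncard := by
      rw [iterate_succ_apply']
      exact Set.ncard_lt_ncard ((hg _).ssubset_of_ne (h n n.lt_succ_self)) (Set.toFinite _)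
    have := ncard_iterate_add_le_of_not_isFixedPt hg X n fun k hk => h k (hk.trans n.lt_succ_self)
    omega

theorem exists_le_card_isFixedPt_iterate (hg : g ≤ id) (X : Set α) :
    ∃ k ≤ Nat.card α, IsFixedPt g (g^[k] X) := by
  by_contra! h
  have := ncard_iterate_add_le_of_not_isFixedPt g hg X (Nat.card α + 1)
    fun k hk => h k (Nat.lt_succ_iff.mp hk)
  omega

theorem iterate_eq_iterate_card_of_card_le (hg : g ≤ id) (X : Set α) {n : ℕ}
    (hn : Nat.card α ≤ n) :
    g^[n] X = g^[Nat.card α] X := by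
  obtain ⟨k, hk, hfix⟩ := exists_le_card_isFixedPt_iterate g hg X
  have hstable : ∀ m, k ≤ m → g^[m] X = g^[k] X := fun m hm => by
    rw [← Nat.sub_add_cancel hm, iterate_add_apply, hfix.iterate]
  rw [hstable n (hk.trans hn), hstable _ hk]

end DeflationaryIterate

section SigmaSeq

variable {L : Type} [DecidableEq L] (S E : Set (Multiset L))

def sigmaStep (X : Set L) : Set L :=
  {σ | σ ∈ X ∧ ∃ C ∈ S, σ ∈ C ∧ ∀ α ∈ C.erase σ, ∃ β ∈ X, ({α, β} : Multiset L) ∈ E}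

theorem sigmaStep_le_id : sigmaStep S E ≤ id := fun _ _ hσ => hσ.1

theorem sigmaSeq_add_two (i : ℕ) : sigmaSeq S E (i + 2) = sigmaStep S E (sigmaSeq S E (i + 1)) :=
  rfl

theorem sigmaSeq_succ_subset {i : ℕ} (hi : 1 ≤ i) : sigmaSeq S E (i + 1) ⊆ sigmaSeq S E i := by
  obtain ⟨j, rfl⟩ := Nat.exists_eq_add_of_le' hi
  exact sigmaStep_le_id S E _

theorem sigmaSeq_succ_eq_iterate (i : ℕ) :
    sigmaSeq S E (i + 1) = (sigmaStep S E)^[i] (sigmaSeq S E 1) := by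
  induction i with
  | zero => rfl
  | succ i ih => rw [sigmaSeq_add_two, ih, iterate_succ_apply']

variable [Fintype L]

theorem sigmaSeq_eq_of_card_succ_le {i : ℕ} (hi : Fintype.card L + 1 ≤ i) :
    sigmaSeq S E i = sigmaSeq S E (Fintype.card L + 1) := by
  obtain ⟨j, rfl⟩ : ∃ j, i = j + 1 := ⟨i - 1, by omega⟩
  have hj : Nat.card L ≤ j := by rw [Nat.card_eq_fintype_card]; omega
  rw [sigmaSeq_succ_eq_iterate S E j, sigmaSeq_succ_eq_iterate S E (Fintype.card L),
    ← Nat.card_eq_fintype_card]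
  exact iterate_eq_iterate_card_of_card_le _ (sigmaStep_le_id S E) _ hj

theorem sigmaSeq_card_succ_subset (k : ℕ) :
    sigmaSeq S E (Fintype.card L + 1) ⊆ sigmaSeq S E (k + 1) := by
  rw [← sigmaSeq_eq_of_card_succ_le S E (i := max (Fintype.card L) k + 1) (by omega),
    sigmaSeq_succ_eq_iterate S E k, sigmaSeq_succ_eq_iterate S E (max _ k)]
  exact antitone_iterate_of_le_id (sigmaStep_le_id S E) (le_max_right _ _) _

end SigmaSeq

section LclCompat

variable {L : Type} [DecidableEq L] (S E : Set (Multiset L))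

theorem lclCompat_of_succ : ∀ (i : ℕ) (τ : L), lclCompat S E (i + 1) τ → lclCompat S E i τ
  | 0, _, _ => trivial
  | i + 1, _, ⟨C, hC, hτ, hchildren⟩ => ⟨C, hC, hτ, fun β hβ =>
      let ⟨τ', hE, hτ'⟩ := hchildren β hβ
      ⟨τ', hE, lclCompat_of_succ i τ' hτ'⟩⟩

theorem mem_sigmaSeq_succ_of_lclCompat_succ :
    ∀ (i : ℕ) (τ : L), lclCompat S E (i + 1) τ → τ ∈ sigmaSeq S E (i + 1)
  | 0, _, ⟨C, hC, hτ, _⟩ => ⟨C, hC, hτ⟩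
  | i + 1, τ, h@⟨C, hC, hτ, hchildren⟩ =>
    ⟨mem_sigmaSeq_succ_of_lclCompat_succ i τ (lclCompat_of_succ S E _ τ h), C, hC, hτ,
      fun α hα =>
        let ⟨τ', hE, hτ'⟩ := hchildren α hα
        ⟨τ', mem_sigmaSeq_succ_of_lclCompat_succ i τ' hτ', hE⟩⟩

theorem lclCompat_of_mem_sigmaSeq_succ :
    ∀ (i : ℕ) (τ : L), τ ∈ sigmaSeq S E (i + 1) → lclCompat S E i τ
  | 0, _, _ => trivial
  | i + 1, _, ⟨_, C, hC, hτ, hchildren⟩ => ⟨C, hC, hτ, fun α hα =>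
      let ⟨β, hβ, hE⟩ := hchildren α hα
      ⟨β, hE, lclCompat_of_mem_sigmaSeq_succ i β hβ⟩⟩

theorem mem_lclTrim_iff [Fintype L] {C : Multiset L} (hC : C ∈ S) :
    C ∈ lclTrim S E ↔
      ∀ α ∈ C, ∃ β ∈ sigmaSeq S E (Fintype.card L + 1), ({α, β} : Multiset L) ∈ E := by
  constructor
  · rintro ⟨-, htrees⟩ α hα
    obtain ⟨τ, hE, hτ⟩ := htrees (Fintype.card L + 2) (by omega) α hα
    exact ⟨τ, mem_sigmaSeq_succ_of_lclCompat_succ S E _ τ hτ, hE⟩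
  · refine fun h => ⟨hC, fun i _ α hα => ?_⟩
    obtain ⟨β, hβ, hE⟩ := h α hα
    exact ⟨β, hE, lclCompat_of_mem_sigmaSeq_succ S E _ β (sigmaSeq_card_succ_subset S E _ hβ)⟩

end LclCompat

theorem stmt19_general {L : Type} [Fintype L] [DecidableEq L]
    (E : Set (Multiset L))
    (S : Set (Multiset L)) :
    (∀ i : ℕ, 1 ≤ i → sigmaSeq S E (i + 1) ⊆ sigmaSeq S E i) ∧
    (∀ i : ℕ, Fintype.card L + 1 ≤ i →
      sigmaSeq S E i = sigmaSeq S E (Fintype.card L + 1)) ∧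
    (∀ C ∈ S, (C ∈ lclTrim S E ↔
      ∀ α ∈ C, ∃ β ∈ sigmaSeq S E (Fintype.card L + 1), ({α, β} : Multiset L) ∈ E)) :=
  ⟨fun _ => sigmaSeq_succ_subset S E, fun _ => sigmaSeq_eq_of_card_succ_le S E,
    fun _ => mem_lclTrim_iff S E⟩

/-- Characterization of `trim(𝒮)` via the stabilizing sequence
`Σ_1 ⊇ Σ_2 ⊇ ⋯` with fixed point `Σ* = Σ_{|Σ|+1}`. -/
theorem stmt19 {L : Type} [Fintype L] [DecidableEq L]
    (Δ : ℕ) (hΔ : 1 ≤ Δ) (V E : Set (Multiset L))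
    (hV : ∀ C ∈ V, Multiset.card C = Δ)
    (hE : ∀ D ∈ E, Multiset.card D = 2)
    (S : Set (Multiset L)) (hS : S ⊆ V) :
    (∀ i : ℕ, 1 ≤ i → sigmaSeq S E (i + 1) ⊆ sigmaSeq S E i) ∧
    (∀ i : ℕ, Fintype.card L + 1 ≤ i →
      sigmaSeq S E i = sigmaSeq S E (Fintype.card L + 1)) ∧
    (∀ C ∈ S, (C ∈ lclTrim S E ↔
      ∀ α ∈ C, ∃ β ∈ sigmaSeq S E (Fintype.card L + 1), ({α, β} : Multiset L) ∈ E)) :=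
  stmt19_general E S
end
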